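/- Let A be an invertible real n×n matrix, b, x₀ ∈ ℝⁿ, and r₀ = b − A x₀. Then there exists x ∈ x₀ + 𝒦_{n−1}(A, r₀) with A x = b; in other words, the GMRES minimization min ‖b − Ax‖₂ over x ∈ x₀ + 𝒦_{n−1}(A, r₀) attains the value 0, so GMRES obtains the exact solution after at most n iterations. -/

import Mathlib

open Matrix

/-- The Krylov subspace `𝒦ₘ(A, r₀) = span {r₀, A r₀, …, Aᵐ r₀}`. -/
def krylov {n : ℕ} (A : Matrix (Fin n) (Fin n) ℝ) (r₀ : Fin n → ℝ) (m : ℕ) :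
    Submodule ℝ (Fin n → ℝ) :=
  Submodule.span ℝ (Set.range fun i : Fin (m + 1) => (A ^ (i : ℕ)) *ᵥ r₀)

/-!
Reading Cayley–Hamilton `χ_A(A) = 0` at the constant term gives
`A · (χ_A / X)(A) = -χ_A(0)`, and `χ_A(0) = ±det A` is a unit, so `A⁻¹ = q(A)` for a
polynomial `q` of degree at most `n - 1`. The correction `z = q(A) r₀ = A⁻¹ r₀` therefore
lies in `𝒦_{n-1}(A, r₀)` and solves `A (x₀ + z) = A x₀ + r₀ = b`.
-/

open Polynomial

namespace Matrix

variable {ι R : Type*} [Fintype ι] [DecidableEq ι] [CommRing R]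

theorem isUnit_charpoly_coeff_zero {A : Matrix ι ι R} (hA : IsUnit A) :
    IsUnit (A.charpoly.coeff 0) := by
  have hdet := (isUnit_iff_isUnit_det A).mp hA
  rw [det_eq_sign_charpoly_coeff] at hdet
  exact isUnit_of_mul_isUnit_right hdet

theorem exists_natDegree_le_mul_aeval_eq_one [Nontrivial R] {A : Matrix ι ι R}
    (hA : IsUnit A) : ∃ q : R[X], q.natDegree ≤ Fintype.card ι - 1 ∧ A * aeval A q = 1 := by
  obtain ⟨u, hu⟩ := isUnit_charpoly_coeff_zero hA
  refine ⟨C (-(u⁻¹ : Rˣ) : R) * A.charpoly.divX, ?_, ?_⟩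
  · calc (C (-(u⁻¹ : Rˣ) : R) * A.charpoly.divX).natDegree ≤ A.charpoly.divX.natDegree :=
          natDegree_C_mul_le _ _
      _ = Fintype.card ι - 1 := by
          rw [natDegree_divX_eq_natDegree_tsub_one, charpoly_natDegree_eq_dim]
  · have hCH : A * aeval A A.charpoly.divX = -algebraMap R _ u := by
      have := congrArg (aeval A) (X_mul_divX_add A.charpoly)
      rwa [aeval_self_charpoly, map_add, map_mul, aeval_X, aeval_C, ← hu,
        add_eq_zero_iff_eq_neg] at this
    rw [map_mul, aeval_C, ← mul_assoc, ← Algebra.commutes, mul_assoc, hCH, mul_neg,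
      ← map_mul, ← map_neg, neg_mul, neg_neg, Units.inv_mul, map_one]

end Matrix

theorem aeval_mulVec_mem_krylov {n m : ℕ} (A : Matrix (Fin n) (Fin n) ℝ) (r : Fin n → ℝ)
    {p : ℝ[X]} (hp : p.natDegree ≤ m) : aeval A p *ᵥ r ∈ krylov A r m := by
  rw [aeval_eq_sum_range' (Nat.lt_succ_of_le hp), sum_mulVec]
  refine Submodule.sum_mem _ fun i hi => ?_
  rw [smul_mulVec]
  exact Submodule.smul_mem _ _ (Submodule.subset_span ⟨⟨i, Finset.mem_range.mp hi⟩, rfl⟩)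

/-- For an invertible `A`, the exact solution of `A x = b` lies in the affine
set `x₀ + 𝒦_{n-1}(A, r₀)`: there exists `x ∈ x₀ + 𝒦_{n-1}(A, r₀)` with
`A x = b`, so the GMRES minimization over this set attains the value `0` and
GMRES obtains the exact solution after at most `n` iterations. -/
theorem gmres_exact_in_n_steps {n : ℕ}
    (A : Matrix (Fin n) (Fin n) ℝ) (hA : IsUnit A)
    (b x₀ : Fin n → ℝ) (r₀ : Fin n → ℝ) (hr₀ : r₀ = b - A *ᵥ x₀) :
    ∃ z ∈ krylov A r₀ (n - 1), A *ᵥ (x₀ + z) = b := by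
  obtain ⟨q, hq, hAq⟩ := exists_natDegree_le_mul_aeval_eq_one hA
  rw [Fintype.card_fin] at hq
  refine ⟨aeval A q *ᵥ r₀, aeval_mulVec_mem_krylov A r₀ hq, ?_⟩
  rw [mulVec_add, mulVec_mulVec, hAq, one_mulVec, hr₀, add_sub_cancel]
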